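/- Given a bundle B of finite nonzero height, the subgraph B' obtained by removing, from each strand prefix in B, its last node whenever that last node is either a receive node or a send node with no corresponding receive in B, is again a bundle, satisfies B' ↦ B (when each strand is its own agent), and has height strictly less than the height of B. -/

import Mathlib

namespace StrandPaper

/-- A strand space over a message set `M`: a type of strands, each with a trace,
a finite sequence of signed terms.  A signed term `(true, u)` is `+u` (send) and
`(false, u)` is `-u` (receive). -/
structure StrandSpace (M : Type) where
  Strand : Type
  tr : Strand → List (Bool × M)

namespace StrandSpace

variable {M α : Type}

/-- Nodes are pairs of a strand and a (1-based) index. -/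
abbrev Node (S : StrandSpace M) : Type := S.Strand × ℕ

/-- The signed term at a node (if the index is valid). -/
def term (S : StrandSpace M) (n : S.Node) : Option (Bool × M) := (S.tr n.1)[n.2 - 1]?

def IsNode (S : StrandSpace M) (n : S.Node) : Prop := 1 ≤ n.2 ∧ n.2 ≤ (S.tr n.1).length

/-- `n1 → n2`: `term n1 = +u` and `term n2 = -u`. -/
def SendsTo (S : StrandSpace M) (n1 n2 : S.Node) : Prop :=
  ∃ u, S.term n1 = some (true, u) ∧ S.term n2 = some (false, u)

/-- `n1 ⇒ n2`: consecutive nodes of the same strand. -/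
def SuccEdge (S : StrandSpace M) (n1 n2 : S.Node) : Prop :=
  n2.1 = n1.1 ∧ n2.2 = n1.2 + 1 ∧ S.IsNode n1 ∧ S.IsNode n2

/-- A (possibly infinite) bundle: a subgraph of `(N, → ∪ ⇒)` satisfying B2–B4:
every negative node has a unique incoming `→` edge, `⇒`-downward closure and
acyclicity. -/
structure Bundle (S : StrandSpace M) where
  nodes : Set S.Node
  comm : S.Node → S.Node → Prop
  nodes_valid : ∀ n ∈ nodes, S.IsNode n
  comm_mem : ∀ n1 n2, comm n1 n2 → n1 ∈ nodes ∧ n2 ∈ nodes ∧ S.SendsTo n1 n2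
  recv_unique : ∀ n2 ∈ nodes, ∀ u, S.term n2 = some (false, u) → ∃! n1, comm n1 n2
  succ_closed : ∀ n1 n2, S.SuccEdge n1 n2 → n2 ∈ nodes → n1 ∈ nodes
  acyclic : ∀ n, ¬ Relation.TransGen
      (fun m1 m2 => comm m1 m2 ∨ (S.SuccEdge m1 m2 ∧ m1 ∈ nodes ∧ m2 ∈ nodes)) n n

variable {S : StrandSpace M}

/-- The causal edges (`→` or `⇒`) of a bundle. -/
def Bundle.edge (B : S.Bundle) (n1 n2 : S.Node) : Prop :=
  B.comm n1 n2 ∨ (S.SuccEdge n1 n2 ∧ n1 ∈ B.nodes ∧ n2 ∈ B.nodes)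

/-- A causal path in a bundle. -/
def Bundle.CausalPath (B : S.Bundle) (l : List S.Node) : Prop :=
  l.Chain' B.edge ∧ ∀ n ∈ l, n ∈ B.nodes

/-- The height of the bundle is at most `k`: every causal path has at most `k+1` nodes
(i.e. length at most `k`). -/
def Bundle.HeightLE (B : S.Bundle) (k : ℕ) : Prop :=
  ∀ l, B.CausalPath l → l.length ≤ k + 1

def Bundle.FiniteHeight (B : S.Bundle) : Prop := ∃ k, B.HeightLE k

noncomputable def Bundle.height (B : S.Bundle) : ℕ := sInf {k | B.HeightLE k}

/-- The height of a strand in a bundle: the largest `i` with `⟨s,i⟩ ∈ B` (0 if none). -/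
noncomputable def Bundle.strandHeight (B : S.Bundle) (s : S.Strand) : ℕ :=
  sSup {i | (s, i) ∈ B.nodes}

/-- The empty bundle. -/
def emptyBundle (S : StrandSpace M) : S.Bundle where
  nodes := ∅
  comm := fun _ _ => False
  nodes_valid := fun n hn => absurd hn (Set.notMem_empty n)
  comm_mem := fun _ _ h => h.elim
  recv_unique := fun n hn => absurd hn (Set.notMem_empty n)
  succ_closed := fun _ n2 _ h => absurd h (Set.notMem_empty n2)
  acyclic := by
    intro n h
    cases h with
    | single h1 => rcases h1 with h1 | ⟨_, h3, _⟩
                   · exact h1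
                   · exact h3
    | tail _ h1 => rcases h1 with h1 | ⟨_, h3, _⟩
                   · exact h1
                   · exact h3

/-- `B1 ⊑_f B2`: `f` maps each strand prefix in `B1` into `B2`, preserving terms
and `→` edges. -/
def Embeds (f : S.Strand ≃ S.Strand) (B1 B2 : S.Bundle) : Prop :=
  (∀ s i, (s, i) ∈ B1.nodes → (f s, i) ∈ B2.nodes ∧ S.term (s, i) = S.term (f s, i)) ∧
  (∀ s i s' j, B1.comm (s, i) (s', j) → B2.comm (f s, i) (f s', j))

/-- `B1 ↦ B2` via the agent-respecting bijection `f`: `B1 ⊑_f B2` and, for each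
agent, at most one of its strands is extended, by at most (exactly) one node. -/
def StepVia (A : S.Strand → α) (f : S.Strand ≃ S.Strand) (B1 B2 : S.Bundle) : Prop :=
  (∀ s, A (f s) = A s) ∧ Embeds f B1 B2 ∧
  ∀ s s', A s = A s' →
    B2.strandHeight (f s) ≠ B1.strandHeight s →
    B2.strandHeight (f s') ≠ B1.strandHeight s' →
    s = s' ∧ B2.strandHeight (f s) = B1.strandHeight s + 1

/-- `B1 ↦ B2`. -/
def Step (A : S.Strand → α) (B1 B2 : S.Bundle) : Prop := ∃ f, StepVia A f B1 B2

/-- A chain `B_0 ↦ B_1 ↦ ⋯` starting from the empty bundle. -/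
structure Chain (A : S.Strand → α) where
  B : ℕ → S.Bundle
  init : B 0 = emptyBundle S
  step : ∀ k, Step A (B k) (B (k + 1))

/-- The event (if any) performed by agent `a` in the step `B1 ↦ B2`:
the term of the single new node on a strand of `a`. -/
noncomputable def stepEvent (A : S.Strand → α) (B1 B2 : S.Bundle) (a : α) :
    Option (Bool × M) := by
  classical
  exact if h : ∃ p : (S.Strand ≃ S.Strand) × S.Strand,
      StepVia A p.1 B1 B2 ∧ A p.2 = a ∧
      B2.strandHeight (p.1 p.2) = B1.strandHeight p.2 + 1 then
    S.term (h.choose.1 h.choose.2, B2.strandHeight (h.choose.1 h.choose.2))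
  else none

/-- The history of agent `a` at time `m` along a chain. -/
noncomputable def Chain.hist {A : S.Strand → α} (C : Chain (S := S) A) (a : α) :
    ℕ → List (Bool × M)
  | 0 => []
  | m + 1 => C.hist a m ++ (stepEvent A (C.B m) (C.B (m + 1)) a).toList

end StrandSpace

/-- A run: a local state (history of events) for each agent at each time.
`(true, u)` is `sent(u)` and `(false, u)` is `recv(u)`. -/
def Run (α M : Type) := ℕ → α → List (Bool × M)

variable {M α : Type}

/-- MP1–MP3 with respect to generating history sets `V`. -/
def MP (V : α → Set (List (Bool × M))) (r : Run α M) : Prop :=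
  (∀ a m, r m a ∈ V a) ∧
  (∀ a m u, (false, u) ∈ r m a → ∃ b, (true, u) ∈ r m b) ∧
  (∀ a, r 0 a = []) ∧
  (∀ a m, r (m + 1) a = r m a ∨ ∃ e, r (m + 1) a = r m a ++ [e])

/-- The strand system generated by history sets `V`: all runs satisfying MP1–3. -/
def generated (V : α → Set (List (Bool × M))) : Set (Run α M) := {r | MP V r}

def IsStrandSystem (R : Set (Run α M)) : Prop :=
  ∃ V : α → Set (List (Bool × M)), R = generated V

/-- The run associated with a chain. -/
noncomputable def StrandSpace.Chain.run {S : StrandSpace M} {A : S.Strand → α}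
    (C : StrandSpace.Chain (S := S) A) : Run α M := fun m a => C.hist a m

/-- `R(Σ, A, A)`: the translation of the strand space `S` under agent assignment `A`. -/
def systemOf (S : StrandSpace M) (A : S.Strand → α) : Set (Run α M) :=
  {r | ∃ C : StrandSpace.Chain (S := S) A, C.run = r}

end StrandPaper

open StrandPaper StrandPaper.StrandSpace

/-- A node is removable from `B` if it is the last node of its strand's prefix in `B`
and is either a receive node or a send node with no corresponding receive in `B`. -/
def Removable {M : Type} {S : StrandSpace M} (B : S.Bundle) (n : S.Node) : Prop :=
  n ∈ B.nodes ∧ n.2 = B.strandHeight n.1 ∧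
  ((∃ u, S.term n = some (false, u)) ∨
   (∃ u, S.term n = some (true, u) ∧ ¬ ∃ n' : S.Node, B.comm n n'))

/-!
A node with an outgoing `→` edge is a send node with a receiver, and a node below the top of
its strand prefix has a `⇒` successor, so neither is removable; hence deleting the removable
nodes keeps `⇒`-downward closure and every sender of a remaining receive, and `B'` is a bundle.
Each strand loses at most its last node, which is `B' ↦ B`. Conversely every node of `B'` has an
outgoing edge in `B` (to its strand successor or, as a top send node, to its receiver), so every
causal path of `B'` extends by one node in `B`, and the height drops.
-/

namespace StrandPaper.StrandSpace

variable {M : Type} {S : StrandSpace M}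

theorem IsNode.exists_term_eq_some {n : S.Node} (h : S.IsNode n) : ∃ p, S.term n = some p :=
  ⟨(S.tr n.1)[n.2 - 1]'(by have := h.1; have := h.2; omega), List.getElem?_eq_getElem _⟩

namespace Bundle

variable {B B' : S.Bundle}

theorem bddAbove_strand (B : S.Bundle) (s : S.Strand) : BddAbove {i | (s, i) ∈ B.nodes} :=
  ⟨(S.tr s).length, fun _ hi => (B.nodes_valid _ hi).2⟩

theorem le_strandHeight {s : S.Strand} {i : ℕ} (h : (s, i) ∈ B.nodes) : i ≤ B.strandHeight s :=
  le_csSup (B.bddAbove_strand s) h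

theorem strandHeight_mono (h : B'.nodes ⊆ B.nodes) (s : S.Strand) :
    B'.strandHeight s ≤ B.strandHeight s :=
  csSup_le_csSup' (B.bddAbove_strand s) fun _ hi => h hi

theorem mem_of_succ_mem {s : S.Strand} {i : ℕ} (h : (s, i + 1) ∈ B.nodes) (hi : 1 ≤ i) :
    (s, i) ∈ B.nodes := by
  have hsucc := B.nodes_valid _ h
  exact B.succ_closed (s, i) (s, i + 1) ⟨rfl, rfl, ⟨hi, by have := hsucc.2; dsimp only at this ⊢; omega⟩, hsucc⟩ h

theorem mem_of_le_of_mem {s : S.Strand} {i j : ℕ} (hi : 1 ≤ i) (hij : i ≤ j)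
    (hj : (s, j) ∈ B.nodes) : (s, i) ∈ B.nodes := by
  induction j, hij using Nat.le_induction with
  | base => exact hj
  | succ j hij ih => exact ih (mem_of_succ_mem hj (by omega))

theorem mem_of_le_strandHeight {s : S.Strand} {i : ℕ} (hi : 1 ≤ i)
    (hih : i ≤ B.strandHeight s) : (s, i) ∈ B.nodes := by
  have hne : {i | (s, i) ∈ B.nodes}.Nonempty := by
    by_contra hempty
    rw [Set.not_nonempty_iff_eq_empty] at hempty
    have : B.strandHeight s = 0 := by rw [strandHeight, hempty, csSup_empty]; rfl
    omega
  exact mem_of_le_of_mem hi hih (Nat.sSup_mem hne (B.bddAbove_strand s))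

theorem edge_mono (hnodes : B'.nodes ⊆ B.nodes) (hcomm : ∀ n1 n2, B'.comm n1 n2 → B.comm n1 n2)
    {n1 n2 : S.Node} : B'.edge n1 n2 → B.edge n1 n2
  | .inl h => .inl (hcomm _ _ h)
  | .inr ⟨h, h1, h2⟩ => .inr ⟨h, hnodes h1, hnodes h2⟩

theorem CausalPath.mono {l : List S.Node} (hl : B'.CausalPath l) (hnodes : B'.nodes ⊆ B.nodes)
    (hcomm : ∀ n1 n2, B'.comm n1 n2 → B.comm n1 n2) : B.CausalPath l :=
  ⟨hl.1.imp fun _ _ => edge_mono hnodes hcomm, fun n hn => hnodes (hl.2 n hn)⟩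

theorem CausalPath.append_singleton {l : List S.Node} {n : S.Node} (hl : B.CausalPath l)
    (hne : l ≠ []) (he : B.edge (l.getLast hne) n) (hn : n ∈ B.nodes) :
    B.CausalPath (l ++ [n]) := by
  refine ⟨hl.1.append (List.isChain_singleton n) ?_, ?_⟩
  · simpa [List.getLast?_eq_some_getLast hne] using he
  · intro m hm
    exact (List.mem_append.mp hm).elim (hl.2 m) fun h => List.mem_singleton.mp h ▸ hn

theorem height_lt_of_forall_exists_edge (hfin : B.FiniteHeight) (hpos : 0 < B.height)
    (hnodes : B'.nodes ⊆ B.nodes) (hcomm : ∀ n1 n2, B'.comm n1 n2 → B.comm n1 n2)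
    (hext : ∀ n ∈ B'.nodes, ∃ n' ∈ B.nodes, B.edge n n') : B'.height < B.height := by
  obtain ⟨k, hk⟩ := Nat.exists_eq_add_one_of_ne_zero hpos.ne'
  have hB : B.HeightLE (k + 1) := hk ▸ Nat.sInf_mem hfin
  have hB' : B'.HeightLE k := by
    intro l hl
    rcases eq_or_ne l [] with rfl | hne
    · simp
    obtain ⟨n', hn', he⟩ := hext _ (hl.2 _ (List.getLast_mem hne))
    have := hB _ ((hl.mono hnodes hcomm).append_singleton hne he hn')
    simp only [List.length_append, List.length_singleton] at this
    omega
  calc B'.height ≤ k := Nat.sInf_le hB'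
    _ < B.height := by omega

theorem step_id_of_subgraph (hnodes : B'.nodes ⊆ B.nodes)
    (hcomm : ∀ n1 n2, B'.comm n1 n2 → B.comm n1 n2)
    (hheight : ∀ s, B.strandHeight s ≤ B'.strandHeight s + 1) :
    Step (id : S.Strand → S.Strand) B' B := by
  refine ⟨Equiv.refl _, fun _ => rfl, ⟨fun s i h => ⟨hnodes h, rfl⟩, fun s i s' j h => hcomm _ _ h⟩,
    fun s s' (hss' : s = s') hne _ => ⟨hss', ?_⟩⟩
  have := strandHeight_mono hnodes s
  have := hheight s
  simp only [Equiv.refl_apply, ne_eq] at hne ⊢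
  omega

def restrict (B : S.Bundle) (N : Set S.Node) (hN : N ⊆ B.nodes)
    (hsucc : ∀ n1 n2, S.SuccEdge n1 n2 → n2 ∈ N → n1 ∈ N)
    (hsend : ∀ n1 n2, B.comm n1 n2 → n2 ∈ N → n1 ∈ N) : S.Bundle where
  nodes := N
  comm n1 n2 := B.comm n1 n2 ∧ n1 ∈ N ∧ n2 ∈ N
  nodes_valid n hn := B.nodes_valid n (hN hn)
  comm_mem n1 n2 h := ⟨h.2.1, h.2.2, (B.comm_mem _ _ h.1).2.2⟩
  recv_unique n2 hn2 u hu := by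
    obtain ⟨n1, h1, huniq⟩ := B.recv_unique n2 (hN hn2) u hu
    exact ⟨n1, ⟨h1, hsend _ _ h1 hn2, hn2⟩, fun m hm => huniq m hm.1⟩
  succ_closed := hsucc
  acyclic n h := B.acyclic n <| Relation.TransGen.mono
    (fun _ _ e => e.imp (·.1) fun ⟨hs, h1, h2⟩ => ⟨hs, hN h1, hN h2⟩) n n h

theorem not_removable_of_comm {n1 n2 : S.Node} (h : B.comm n1 n2) : ¬ Removable B n1 := by
  rintro ⟨-, -, ⟨u, hu⟩ | ⟨-, -, hno⟩⟩
  · obtain ⟨v, hv, -⟩ := (B.comm_mem _ _ h).2.2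
    rw [hu] at hv
    cases hv
  · exact hno ⟨n2, h⟩

theorem not_removable_of_succEdge {n1 n2 : S.Node} (h : S.SuccEdge n1 n2) (hn2 : n2 ∈ B.nodes) :
    ¬ Removable B n1 := by
  rintro ⟨-, htop, -⟩
  obtain ⟨hs, hi, -, -⟩ := h
  have := B.le_strandHeight hn2
  rw [hs, hi] at this
  omega

theorem exists_edge_of_not_removable {n : S.Node} (hn : n ∈ B.nodes) (hr : ¬ Removable B n) :
    ∃ n' ∈ B.nodes, B.edge n n' := by
  rcases (B.le_strandHeight hn).lt_or_eq with hlt | htop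
  · have hsucc : (n.1, n.2 + 1) ∈ B.nodes := mem_of_le_strandHeight (by omega) hlt
    exact ⟨_, hsucc, .inr ⟨⟨rfl, rfl, B.nodes_valid _ hn, B.nodes_valid _ hsucc⟩, hn, hsucc⟩⟩
  obtain ⟨⟨_ | _, u⟩, hu⟩ := (B.nodes_valid _ hn).exists_term_eq_some
  · exact absurd ⟨hn, htop, .inl ⟨u, hu⟩⟩ hr
  · obtain ⟨n', hc⟩ : ∃ n', B.comm n n' :=
      by_contra fun hno => hr ⟨hn, htop, .inr ⟨u, hu, hno⟩⟩
    exact ⟨n', (B.comm_mem _ _ hc).2.1, .inl hc⟩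

def shrink (B : S.Bundle) : S.Bundle :=
  B.restrict (B.nodes \ {n | Removable B n}) Set.sdiff_subset
    (fun _ _ hs hn2 => ⟨B.succ_closed _ _ hs hn2.1, not_removable_of_succEdge hs hn2.1⟩)
    (fun _ _ hc _ => ⟨(B.comm_mem _ _ hc).1, not_removable_of_comm hc⟩)

theorem strandHeight_le_shrink_add_one (B : S.Bundle) (s : S.Strand) :
    B.strandHeight s ≤ B.shrink.strandHeight s + 1 := by
  by_cases hs : B.strandHeight s ≤ 1
  · omega
  have hmem : (s, B.strandHeight s - 1) ∈ B.shrink.nodes := by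
    refine ⟨mem_of_le_strandHeight (by omega) (by omega), fun hr => ?_⟩
    have := hr.2.1
    dsimp only at this
    omega
  have := B.shrink.le_strandHeight hmem
  omega

end Bundle

end StrandPaper.StrandSpace

/-- Given a bundle `B` of finite nonzero height, removing the removable
last nodes of strand prefixes yields a subgraph `B'` which is again a bundle, satisfies
`B' ↦ B` (each strand its own agent), and has height strictly less than that of `B`. -/
theorem shrink_bundle {M : Type} {S : StrandSpace M} (B : S.Bundle)
    (hfin : B.FiniteHeight) (hnz : 0 < B.height) :
    ∃ B' : S.Bundle,
      B'.nodes = B.nodes \ {n | Removable B n} ∧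
      (∀ n1 n2, B'.comm n1 n2 ↔ B.comm n1 n2 ∧ n1 ∈ B'.nodes ∧ n2 ∈ B'.nodes) ∧
      Step (id : S.Strand → S.Strand) B' B ∧
      B'.height < B.height := by
  refine ⟨B.shrink, rfl, fun _ _ => Iff.rfl, ?_, ?_⟩
  · exact Bundle.step_id_of_subgraph Set.sdiff_subset (fun _ _ h => h.1)
      B.strandHeight_le_shrink_add_one
  · exact Bundle.height_lt_of_forall_exists_edge hfin hnz Set.sdiff_subset (fun _ _ h => h.1)
      fun _ hn => Bundle.exists_edge_of_not_removable hn.1 hn.2
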